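/- arXiv:1509.07634 — 9 statements merged into one kernel-verified Lean document; each statement's English description precedes it below -/
import Mathlib

section
/- Let f be a real-valued function defined on pairs of positive integers which is nonnegative and subadditive in each variable separately, i.e., f(p₁+p₂, q) ≤ f(p₁, q) + f(p₂, q) and f(p, q₁+q₂) ≤ f(p, q₁) + f(p, q₂) for all positive integers p, p₁, p₂, q, q₁, q₂. Then f(p,q)/(p·q) converges, as min(p,q) → ∞, to L := inf_{p,q ≥ 1} f(p,q)/(p·q); that is, for every ε > 0 there exists N such that |f(p,q)/(p·q) − L| < ε whenever p ≥ N and q ≥ N. -/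
private lemma fekete_mulx (f : ℕ → ℕ → ℝ)
    (hsub1 : ∀ p₁ p₂ q : ℕ, 1 ≤ p₁ → 1 ≤ p₂ → 1 ≤ q →
      f (p₁ + p₂) q ≤ f p₁ q + f p₂ q) :
    ∀ a p q : ℕ, 1 ≤ a → 1 ≤ p → 1 ≤ q → f (a * p) q ≤ (a : ℝ) * f p q := by
  intro a
  induction a with
  | zero => intro p q h; simp at h
  | succ n ih =>
    intro p q _ hp hq
    by_cases hn : 1 ≤ n
    · have h1 : f ((n + 1) * p) q ≤ f (n * p) q + f p q := by
        have h := hsub1 (n * p) p q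
          (Nat.one_le_iff_ne_zero.mpr (Nat.mul_ne_zero (by omega) (by omega))) hp hq
        have e : (n + 1) * p = n * p + p := by ring
        rw [e]; exact h
      have h2 := ih p q hn hp hq
      push_cast
      linarith
    · have hn0 : n = 0 := by omega
      subst hn0; simp

private lemma fekete_muly (f : ℕ → ℕ → ℝ)
    (hsub2 : ∀ p q₁ q₂ : ℕ, 1 ≤ p → 1 ≤ q₁ → 1 ≤ q₂ →
      f p (q₁ + q₂) ≤ f p q₁ + f p q₂) :
    ∀ b p q : ℕ, 1 ≤ b → 1 ≤ p → 1 ≤ q → f p (b * q) ≤ (b : ℝ) * f p q := by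
  intro b
  induction b with
  | zero => intro p q h; simp at h
  | succ n ih =>
    intro p q _ hp hq
    by_cases hn : 1 ≤ n
    · have h1 : f p ((n + 1) * q) ≤ f p (n * q) + f p q := by
        have h := hsub2 p (n * q) q hp
          (Nat.one_le_iff_ne_zero.mpr (Nat.mul_ne_zero (by omega) (by omega))) hq
        have e : (n + 1) * q = n * q + q := by ring
        rw [e]; exact h
      have h2 := ih p q hn hp hq
      push_cast
      linarith
    · have hn0 : n = 0 := by omega
      subst hn0; simp

private lemma fekete_decomp (p₀ p : ℕ) (hp₀ : 1 ≤ p₀) (hp : p₀ + 1 ≤ p) :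
    ∃ a r : ℕ, 1 ≤ a ∧ 1 ≤ r ∧ r ≤ p₀ ∧ p = a * p₀ + r := by
  have h1 := Nat.div_add_mod (p - 1) p₀
  have h2 : (p - 1) % p₀ < p₀ := Nat.mod_lt _ (by omega)
  have ha1 : 1 ≤ (p - 1) / p₀ := (Nat.one_le_div_iff (by omega)).mpr (by omega)
  refine ⟨(p - 1) / p₀, (p - 1) % p₀ + 1, ha1, by omega, by omega, ?_⟩
  have e : (p - 1) / p₀ * p₀ = p₀ * ((p - 1) / p₀) := Nat.mul_comm _ _
  rw [e]
  set X := p₀ * ((p - 1) / p₀) with hX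
  omega

set_option maxHeartbeats 2000000 in
/-- Two-variable Fekete lemma: a nonnegative function of two positive integer
variables which is subadditive in each variable separately satisfies
`f p q / (p * q) → inf f p q / (p * q)` as `min p q → ∞`. -/
theorem stmt_0 (f : ℕ → ℕ → ℝ)
    (hnn : ∀ p q : ℕ, 1 ≤ p → 1 ≤ q → 0 ≤ f p q)
    (hsub1 : ∀ p₁ p₂ q : ℕ, 1 ≤ p₁ → 1 ≤ p₂ → 1 ≤ q →
      f (p₁ + p₂) q ≤ f p₁ q + f p₂ q)
    (hsub2 : ∀ p q₁ q₂ : ℕ, 1 ≤ p → 1 ≤ q₁ → 1 ≤ q₂ →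
      f p (q₁ + q₂) ≤ f p q₁ + f p q₂)
    (L : ℝ)
    (hL : L = sInf {x : ℝ | ∃ p q : ℕ, 1 ≤ p ∧ 1 ≤ q ∧ x = f p q / (p * q)}) :
    ∀ ε : ℝ, 0 < ε → ∃ N : ℕ, ∀ p q : ℕ, N ≤ p → N ≤ q →
      |f p q / (p * q) - L| < ε := by
  intro ε hε
  set S : Set ℝ := {x : ℝ | ∃ p q : ℕ, 1 ≤ p ∧ 1 ≤ q ∧ x = f p q / (p * q)} with hS
  have hmem : ∀ p q : ℕ, 1 ≤ p → 1 ≤ q → f p q / ((p : ℝ) * q) ∈ S :=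
    fun p q hp hq => ⟨p, q, hp, hq, rfl⟩
  have hne : S.Nonempty := ⟨_, hmem 1 1 le_rfl le_rfl⟩
  have hbdd : BddBelow S := by
    refine ⟨0, fun x hx => ?_⟩
    obtain ⟨p, q, hp, hq, rfl⟩ := hx
    have hp' : (0 : ℝ) < p := by exact_mod_cast hp
    have hq' : (0 : ℝ) < q := by exact_mod_cast hq
    exact div_nonneg (hnn p q hp hq) (by positivity)
  have hLle : ∀ p q : ℕ, 1 ≤ p → 1 ≤ q → L ≤ f p q / ((p : ℝ) * q) := by
    intro p q hp hq
    rw [hL]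
    exact csInf_le hbdd (hmem p q hp hq)
  have hL0 : 0 ≤ L := by
    rw [hL]
    refine le_csInf hne fun x hx => ?_
    obtain ⟨p, q, hp, hq, rfl⟩ := hx
    have hp' : (0 : ℝ) < p := by exact_mod_cast hp
    have hq' : (0 : ℝ) < q := by exact_mod_cast hq
    exact div_nonneg (hnn p q hp hq) (by positivity)
  -- pick a near-optimal pair
  obtain ⟨x, hxS, hxlt⟩ : ∃ x ∈ S, x < L + ε / 2 := by
    apply exists_lt_of_csInf_lt hne
    rw [← hL]; linarith
  obtain ⟨p₀, q₀, hp₀, hq₀, rfl⟩ := hxS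
  have hp₀' : (0 : ℝ) < p₀ := by exact_mod_cast hp₀
  have hq₀' : (0 : ℝ) < q₀ := by exact_mod_cast hq₀
  have hF₀ : f p₀ q₀ < (L + ε / 2) * ((p₀ : ℝ) * q₀) := by
    rw [div_lt_iff₀ (by positivity)] at hxlt
    exact hxlt
  have hF₀0 : 0 ≤ f p₀ q₀ := hnn p₀ q₀ hp₀ hq₀
  have hF₁0 : 0 ≤ f p₀ 1 := hnn p₀ 1 hp₀ le_rfl
  have hF₂0 : 0 ≤ f 1 q₀ := hnn 1 q₀ le_rfl hq₀
  have hF₃0 : 0 ≤ f 1 1 := hnn 1 1 le_rfl le_rfl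
  -- choose N
  obtain ⟨M, hM⟩ := exists_nat_gt
    ((6 * ((q₀ : ℝ) * f p₀ 1) + 6 * ((p₀ : ℝ) * f 1 q₀) + 6 * ((p₀ : ℝ) * q₀ * f 1 1)) / ε)
  refine ⟨max M (max p₀ q₀ + 1), fun p q hp hq => ?_⟩
  have hpN : max p₀ q₀ + 1 ≤ p := le_trans (le_max_right _ _) hp
  have hqN : max p₀ q₀ + 1 ≤ q := le_trans (le_max_right _ _) hq
  have hMp : M ≤ p := le_trans (le_max_left _ _) hp
  have hMq : M ≤ q := le_trans (le_max_left _ _) hq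
  have hp1 : 1 ≤ p := by omega
  have hq1 : 1 ≤ q := by omega
  have hpR : (0 : ℝ) < p := by exact_mod_cast hp1
  have hqR : (0 : ℝ) < q := by exact_mod_cast hq1
  have hp1R : (1 : ℝ) ≤ p := by exact_mod_cast hp1
  have hq1R : (1 : ℝ) ≤ q := by exact_mod_cast hq1
  -- decompositions
  obtain ⟨a, r, ha1, hr1, hrp, hpeq⟩ := fekete_decomp p₀ p hp₀ (by omega)
  obtain ⟨b, s, hb1, hs1, hsq, hqeq⟩ := fekete_decomp q₀ q hq₀ (by omega)
  have haR : (1 : ℝ) ≤ a := by exact_mod_cast ha1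
  have hbR : (1 : ℝ) ≤ b := by exact_mod_cast hb1
  have hrR : (1 : ℝ) ≤ r := by exact_mod_cast hr1
  have hsR : (1 : ℝ) ≤ s := by exact_mod_cast hs1
  have hrpR : (r : ℝ) ≤ p₀ := by exact_mod_cast hrp
  have hsqR : (s : ℝ) ≤ q₀ := by exact_mod_cast hsq
  have harp : (a : ℝ) * p₀ ≤ p := by
    have : a * p₀ ≤ p := by omega
    exact_mod_cast this
  have hbsq : (b : ℝ) * q₀ ≤ q := by
    have : b * q₀ ≤ q := by omega
    exact_mod_cast this
  have hab1 : 1 ≤ a * p₀ := Nat.one_le_iff_ne_zero.mpr (Nat.mul_ne_zero (by omega) (by omega))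
  have hbq1 : 1 ≤ b * q₀ := Nat.one_le_iff_ne_zero.mpr (Nat.mul_ne_zero (by omega) (by omega))
  -- key subadditivity chain
  have h1 : f p q ≤ (a : ℝ) * f p₀ q + f r q := by
    have ha : f (a * p₀ + r) q ≤ f (a * p₀) q + f r q := hsub1 (a * p₀) r q hab1 hr1 hq1
    have hb := fekete_mulx f hsub1 a p₀ q ha1 hp₀ hq1
    rw [hpeq]; linarith
  have h2 : f p₀ q ≤ (b : ℝ) * f p₀ q₀ + f p₀ s := by
    have ha : f p₀ (b * q₀ + s) ≤ f p₀ (b * q₀) + f p₀ s := hsub2 p₀ (b * q₀) s hp₀ hbq1 hs1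
    have hb := fekete_muly f hsub2 b p₀ q₀ hb1 hp₀ hq₀
    rw [hqeq]; linarith
  have h3 : f r q ≤ (b : ℝ) * f r q₀ + f r s := by
    have ha : f r (b * q₀ + s) ≤ f r (b * q₀) + f r s := hsub2 r (b * q₀) s hr1 hbq1 hs1
    have hb := fekete_muly f hsub2 b r q₀ hb1 hr1 hq₀
    rw [hqeq]; linarith
  have h4 : f p₀ s ≤ (s : ℝ) * f p₀ 1 := by
    have := fekete_muly f hsub2 s p₀ 1 hs1 hp₀ le_rfl
    simpa using this
  have h5 : f r q₀ ≤ (r : ℝ) * f 1 q₀ := by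
    have := fekete_mulx f hsub1 r 1 q₀ hr1 le_rfl hq₀
    simpa using this
  have h6 : f r s ≤ (r : ℝ) * ((s : ℝ) * f 1 1) := by
    have hb : f 1 s ≤ (s : ℝ) * f 1 1 := by
      have := fekete_muly f hsub2 s 1 1 hs1 le_rfl le_rfl
      simpa using this
    have ha : f r s ≤ (r : ℝ) * f 1 s := by
      have := fekete_mulx f hsub1 r 1 s hr1 le_rfl hs1
      simpa using this
    have hc := mul_le_mul_of_nonneg_left hb (by linarith : (0 : ℝ) ≤ (r : ℝ))
    linarith
  have ha0 : (0 : ℝ) ≤ a := by linarith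
  have hb0 : (0 : ℝ) ≤ b := by linarith
  have key : f p q ≤ (a : ℝ) * b * f p₀ q₀ + (a : ℝ) * (s : ℝ) * f p₀ 1
      + (b : ℝ) * (r : ℝ) * f 1 q₀ + (r : ℝ) * (s : ℝ) * f 1 1 := by
    have c2 := mul_le_mul_of_nonneg_left h2 ha0
    have c5 := mul_le_mul_of_nonneg_left h5 hb0
    have c4 := mul_le_mul_of_nonneg_left h4 ha0
    linarith [h1, h3, h6, c2, c4, c5]
  -- bounds on each term
  have hLε : (0 : ℝ) < L + ε / 2 := by linarith
  have t1 : (a : ℝ) * b * f p₀ q₀ < (L + ε / 2) * ((p : ℝ) * q) := by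
    have c1 : (a : ℝ) * b * f p₀ q₀ < (a : ℝ) * b * ((L + ε / 2) * ((p₀ : ℝ) * q₀)) := by
      have hab : (0 : ℝ) < (a : ℝ) * b := by positivity
      exact mul_lt_mul_of_pos_left hF₀ hab
    have c2 : ((a : ℝ) * p₀) * ((b : ℝ) * q₀) ≤ (p : ℝ) * q :=
      mul_le_mul harp hbsq (by positivity) (by positivity)
    have c3 := mul_le_mul_of_nonneg_left c2 (le_of_lt hLε)
    linarith [c1, c3]
  -- the N bound in real form
  have hNR : (6 * ((q₀ : ℝ) * f p₀ 1) + 6 * ((p₀ : ℝ) * f 1 q₀) + 6 * ((p₀ : ℝ) * q₀ * f 1 1))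
      < ε * M := by
    rw [div_lt_iff₀ hε] at hM
    linarith [hM]
  have hnn1 : (0 : ℝ) ≤ (q₀ : ℝ) * f p₀ 1 := mul_nonneg (le_of_lt hq₀') hF₁0
  have hnn2 : (0 : ℝ) ≤ (p₀ : ℝ) * f 1 q₀ := mul_nonneg (le_of_lt hp₀') hF₂0
  have hnn3 : (0 : ℝ) ≤ (p₀ : ℝ) * q₀ * f 1 1 :=
    mul_nonneg (mul_nonneg (le_of_lt hp₀') (le_of_lt hq₀')) hF₃0
  have hMpR : (M : ℝ) ≤ p := by exact_mod_cast hMp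
  have hMqR : (M : ℝ) ≤ q := by exact_mod_cast hMq
  have hM1 : (q₀ : ℝ) * f p₀ 1 < ε / 6 * M := by linarith
  have hM2 : (p₀ : ℝ) * f 1 q₀ < ε / 6 * M := by linarith
  have hM3 : (p₀ : ℝ) * q₀ * f 1 1 < ε / 6 * M := by linarith
  have hp₀1R : (1 : ℝ) ≤ p₀ := by exact_mod_cast hp₀
  have hq₀1R : (1 : ℝ) ≤ q₀ := by exact_mod_cast hq₀
  have hap : (a : ℝ) ≤ p := le_trans (le_mul_of_one_le_right ha0 hp₀1R) harp
  have hbq : (b : ℝ) ≤ q := le_trans (le_mul_of_one_le_right hb0 hq₀1R) hbsq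
  have t2 : (a : ℝ) * (s : ℝ) * f p₀ 1 ≤ ε / 6 * ((p : ℝ) * q) := by
    have c1 : (a : ℝ) * (s : ℝ) * f p₀ 1 ≤ (p : ℝ) * ((q₀ : ℝ) * f p₀ 1) := by
      have d : (a : ℝ) * s ≤ (p : ℝ) * q₀ :=
        mul_le_mul hap hsqR (by linarith) (by linarith)
      have := mul_le_mul_of_nonneg_right d hF₁0
      linarith
    have c2 : (p : ℝ) * ((q₀ : ℝ) * f p₀ 1) ≤ (p : ℝ) * (ε / 6 * M) :=
      mul_le_mul_of_nonneg_left (le_of_lt hM1) (le_of_lt hpR)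
    have c3 : (p : ℝ) * (ε / 6 * M) ≤ (p : ℝ) * (ε / 6 * q) := by
      have h : ε / 6 * M ≤ ε / 6 * q :=
        mul_le_mul_of_nonneg_left hMqR (by linarith : (0 : ℝ) ≤ ε / 6)
      exact mul_le_mul_of_nonneg_left h (le_of_lt hpR)
    linarith [c1, c2, c3]
  have t3 : (b : ℝ) * (r : ℝ) * f 1 q₀ ≤ ε / 6 * ((p : ℝ) * q) := by
    have c1 : (b : ℝ) * (r : ℝ) * f 1 q₀ ≤ (q : ℝ) * ((p₀ : ℝ) * f 1 q₀) := by
      have d : (b : ℝ) * r ≤ (q : ℝ) * p₀ :=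
        mul_le_mul hbq hrpR (by linarith) (by linarith)
      have := mul_le_mul_of_nonneg_right d hF₂0
      linarith
    have c2 : (q : ℝ) * ((p₀ : ℝ) * f 1 q₀) ≤ (q : ℝ) * (ε / 6 * M) :=
      mul_le_mul_of_nonneg_left (le_of_lt hM2) (le_of_lt hqR)
    have c3 : (q : ℝ) * (ε / 6 * M) ≤ (q : ℝ) * (ε / 6 * p) := by
      have h : ε / 6 * M ≤ ε / 6 * p :=
        mul_le_mul_of_nonneg_left hMpR (by linarith : (0 : ℝ) ≤ ε / 6)
      exact mul_le_mul_of_nonneg_left h (le_of_lt hqR)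
    linarith [c1, c2, c3]
  have t4 : (r : ℝ) * (s : ℝ) * f 1 1 ≤ ε / 6 * ((p : ℝ) * q) := by
    have c1 : (r : ℝ) * (s : ℝ) * f 1 1 ≤ (p₀ : ℝ) * q₀ * f 1 1 := by
      have d : (r : ℝ) * s ≤ (p₀ : ℝ) * q₀ :=
        mul_le_mul hrpR hsqR (by linarith) (by linarith)
      have := mul_le_mul_of_nonneg_right d hF₃0
      linarith
    have hMq' : (M : ℝ) ≤ (p : ℝ) * q := by
      have := le_mul_of_one_le_right (le_of_lt hpR) hq1R
      linarith
    have c2 : ε / 6 * M ≤ ε / 6 * ((p : ℝ) * q) :=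
      mul_le_mul_of_nonneg_left hMq' (by linarith : (0 : ℝ) ≤ ε / 6)
    linarith [hM3]
  -- conclude
  have hupper : f p q / ((p : ℝ) * q) < L + ε := by
    rw [div_lt_iff₀ (by positivity)]
    linarith [key, t1, t2, t3, t4]
  have hlower : L ≤ f p q / ((p : ℝ) * q) := hLle p q hp1 hq1
  rw [abs_lt]
  constructor <;> linarith
end

section
/- Let B be an n×n integer matrix whose Alexander polynomial is a unit in ℤ[X, X⁻¹], i.e., det(X·B − Bᵀ) = ±X^k in ℤ[X] for some k ≥ 0. Then n is even and det(B − Bᵀ) = 1. -/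
set_option synthInstance.maxHeartbeats 1000000
set_option maxHeartbeats 1000000

open Matrix Polynomial

lemma my_det_eval {n : ℕ} (B : Matrix (Fin n) (Fin n) ℤ) {R : Type*} [CommRing R] (x : R) :
    eval₂ (Int.castRingHom R) x (((X : ℤ[X]) • B.map C - Bᵀ.map C).det)
      = (x • B.map (Int.castRingHom R) - Bᵀ.map (Int.castRingHom R)).det := by
  rw [← coe_eval₂RingHom, RingHom.map_det]
  congr 1
  ext i j
  simp only [RingHom.mapMatrix_apply, Matrix.map_apply, Matrix.sub_apply, Matrix.smul_apply,
    Matrix.transpose_apply, coe_eval₂RingHom, smul_eq_mul, eval₂_sub, eval₂_mul, eval₂_X,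
    eval₂_C, Int.coe_castRingHom]

lemma my_skew_det_nonneg {m : ℕ} (A : Matrix (Fin m) (Fin m) ℝ) (hA : Aᵀ = -A) : 0 ≤ A.det := by
  rcases Nat.eq_zero_or_pos m with rfl | hm
  · simp [Matrix.det_fin_zero]
  set q := (-A).charpoly with hq
  have hmono : q.Monic := Matrix.charpoly_monic _
  have hdeg : q.natDegree = m := by
    rw [hq, Matrix.charpoly_natDegree_eq_dim, Fintype.card_fin]
  have heval : ∀ t : ℝ, q.eval t = (t • (1 : Matrix (Fin m) (Fin m) ℝ) + A).det := by
    intro t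
    rw [hq, Matrix.charpoly, ← coe_evalRingHom, RingHom.map_det]
    congr 1
    ext i j
    rcases eq_or_ne i j with rfl | hij
    · simp [charmatrix_apply_eq]
    · simp [charmatrix_apply_ne _ _ _ hij, Matrix.one_apply_ne hij]
  have hne : ∀ t : ℝ, 0 < t → q.eval t ≠ 0 := by
    intro t ht h0
    rw [heval] at h0
    obtain ⟨v, hv0, hv⟩ := (Matrix.exists_mulVec_eq_zero_iff).mpr h0
    have hskew : v ⬝ᵥ (A *ᵥ v) = 0 := by
      have h2 : v ⬝ᵥ (A *ᵥ v) = -(v ⬝ᵥ (A *ᵥ v)) := by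
        nth_rewrite 1 [Matrix.dotProduct_mulVec, ← Matrix.mulVec_transpose, hA,
          Matrix.neg_mulVec, neg_dotProduct, dotProduct_comm]
        rfl
      linarith
    have h1 : v ⬝ᵥ ((t • (1 : Matrix (Fin m) (Fin m) ℝ) + A) *ᵥ v) = 0 := by
      rw [hv, dotProduct_zero]
    rw [Matrix.add_mulVec, Matrix.smul_mulVec, Matrix.one_mulVec, dotProduct_add,
      dotProduct_smul, hskew, add_zero, smul_eq_mul] at h1
    have hvv : v ⬝ᵥ v ≠ 0 := fun h => hv0 (dotProduct_self_eq_zero.mp h)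
    exact hvv ((mul_eq_zero.mp h1).resolve_left ht.ne')
  have hA0 : A.det = q.eval 0 := by rw [heval 0]; simp
  by_contra hneg
  push_neg at hneg
  rw [hA0] at hneg
  have htop : Filter.Tendsto (fun t => q.eval t) Filter.atTop Filter.atTop := by
    apply q.tendsto_atTop_of_leadingCoeff_nonneg
    · exact natDegree_pos_iff_degree_pos.mp (by omega)
    · rw [hmono.leadingCoeff]; exact zero_le_one
  obtain ⟨T, hT1, hT2⟩ := ((htop.eventually_ge_atTop 1).and (Filter.eventually_ge_atTop 1)).exists
  have hmem : (0:ℝ) ∈ Set.Ioo (q.eval 0) (q.eval T) := ⟨hneg, by linarith⟩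
  obtain ⟨t, ht, hqt⟩ := intermediate_value_Ioo (by linarith : (0:ℝ) ≤ T)
    (Polynomial.continuous q).continuousOn hmem
  exact hne t ht.1 hqt

/-- If the Alexander polynomial `det (X • B - Bᵀ)` of a square integer matrix
`B` is a unit in `ℤ[X, X⁻¹]`, i.e. equals `±X^k`, then the size of `B` is even
and `det (B - Bᵀ) = 1`. -/
theorem stmt_3 (n : ℕ) (B : Matrix (Fin n) (Fin n) ℤ)
    (h : ∃ k : ℕ,
      ((X : ℤ[X]) • B.map C - Bᵀ.map C).det = X ^ k ∨
      ((X : ℤ[X]) • B.map C - Bᵀ.map C).det = -X ^ k) :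
    Even n ∧ (B - Bᵀ).det = 1 := by
  obtain ⟨k, hk⟩ := h
  obtain ⟨ε, hε, hP⟩ : ∃ ε : ℤ, (ε = 1 ∨ ε = -1) ∧
      ((X : ℤ[X]) • B.map C - Bᵀ.map C).det = C ε * X ^ k := by
    rcases hk with hk | hk
    · exact ⟨1, Or.inl rfl, by simp [hk]⟩
    · exact ⟨-1, Or.inr rfl, by simp [hk]⟩
  -- Step A : det (B - Bᵀ) = ε
  have hBid : B.map (Int.castRingHom ℤ) = B := by ext i j; simp
  have hBtid : Bᵀ.map (Int.castRingHom ℤ) = Bᵀ := by ext i j; simp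
  have hdet : (B - Bᵀ).det = ε := by
    have h1 := my_det_eval B (1 : ℤ)
    rw [hP, hBid, hBtid, one_smul] at h1
    simpa using h1.symm
  -- Step B : Even n
  set K := FractionRing (Polynomial ℤ) with hK
  have hinj : Function.Injective (algebraMap ℤ[X] K) := IsFractionRing.injective _ _
  set x : K := algebraMap ℤ[X] K X with hxdef
  have hx : x ≠ 0 := by
    simp only [hxdef, ne_eq, map_eq_zero_iff _ hinj]
    exact X_ne_zero
  have key : ∀ y : K, ((ε : K)) * y ^ k
      = (y • B.map (Int.castRingHom K) - Bᵀ.map (Int.castRingHom K)).det := by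
    intro y
    have h2 := my_det_eval B y
    rw [hP] at h2
    rw [← h2, eval₂_mul, eval₂_C, eval₂_X_pow, Int.coe_castRingHom]
  set M := B.map (Int.castRingHom K) with hM
  have hMt : Bᵀ.map (Int.castRingHom K) = Mᵀ := by ext i j; simp [hM]
  have key1 := key x
  have key2 := key x⁻¹
  rw [hMt] at key1 key2
  have hfac : x⁻¹ • M - Mᵀ = (-x⁻¹) • (x • Mᵀ - M) := by
    ext i j
    simp only [Matrix.sub_apply, Matrix.smul_apply, smul_eq_mul, Matrix.transpose_apply]
    linear_combination (M j i) * (inv_mul_cancel₀ hx)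
  have hdet2 : (x⁻¹ • M - Mᵀ).det = (-x⁻¹)^n * (x • M - Mᵀ).det := by
    rw [hfac, Matrix.det_smul, Fintype.card_fin]
    congr 1
    rw [← Matrix.det_transpose, Matrix.transpose_sub, Matrix.transpose_smul,
      Matrix.transpose_transpose]
  have heq : (ε:K) * (x⁻¹)^k = (-x⁻¹)^n * ((ε:K) * x^k) := by rw [key2, hdet2, ← key1]
  have hε0 : (ε:K) ≠ 0 := by rcases hε with rfl|rfl <;> norm_num
  have hxn : x ^ n = (-1:K)^n * x^(2*k) := by
    have hxk : x^k * (x⁻¹)^k = 1 := by rw [← mul_pow, mul_inv_cancel₀ hx, one_pow]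
    have hxn' : x^n * (x⁻¹)^n = 1 := by rw [← mul_pow, mul_inv_cancel₀ hx, one_pow]
    rw [neg_pow] at heq
    apply mul_left_cancel₀ hε0
    linear_combination (x^n * x^k) * heq - (ε:K) * x^n * hxk + (-1:K)^n * (ε:K) * x^(2*k) * hxn'
  have hZ : (X:ℤ[X])^n = (-1:ℤ[X])^n * X^(2*k) := by
    apply hinj
    rw [map_pow, _root_.map_mul, map_pow, map_pow, map_neg, _root_.map_one, ← hxdef]
    exact hxn
  have heven : Even n := by
    have h1 := congrArg (Polynomial.eval 1) hZ
    simp only [eval_mul, eval_pow, eval_X, eval_neg, eval_one, one_pow, mul_one] at h1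
    exact (neg_one_pow_eq_one_iff_even (by norm_num : (-1:ℤ) ≠ 1)).mp h1.symm
  refine ⟨heven, ?_⟩
  have hskew : ((B - Bᵀ).map (Int.castRingHom ℝ))ᵀ = -((B - Bᵀ).map (Int.castRingHom ℝ)) := by
    ext i j
    simp only [Matrix.transpose_apply, Matrix.map_apply, Matrix.neg_apply, Matrix.sub_apply,
      Int.coe_castRingHom]
    push_cast
    ring
  have hnn := my_skew_det_nonneg _ hskew
  rw [← RingHom.mapMatrix_apply, ← RingHom.map_det, hdet, Int.coe_castRingHom] at hnn
  have hone : ε = 1 := by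
    rcases hε with rfl | rfl
    · rfl
    · norm_num at hnn
  rw [hdet, hone]
end

section
/- Let k ≥ 1 and let B be the 2k×2k integer matrix with block form B = [[0, U],[L, S]], where U is a k×k upper triangular integer matrix with all diagonal entries equal to 1, L is a k×k lower triangular integer matrix with all diagonal entries equal to 0, and S is an arbitrary k×k integer matrix. Then det(X·B − Bᵀ) = X^k in ℤ[X]; in particular, B is Alexander-trivial. -/
open Matrix Polynomial

lemma sign_sumComm_fin (k : ℕ) :
    Equiv.Perm.sign (Equiv.sumComm (Fin k) (Fin k)) = (-1) ^ k := by
  have h := Equiv.Perm.sign_eq_sign_of_equiv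
    (Equiv.prodCongrLeft (fun _ : Fin k => Equiv.swap (false : Bool) true))
    (Equiv.sumComm (Fin k) (Fin k))
    (Equiv.boolProdEquivSum (Fin k)) ?_
  · rw [← h, Equiv.Perm.sign_prodCongrLeft]
    simp [Equiv.Perm.sign_swap (by decide : (false : Bool) ≠ true)]
  · rintro ⟨b, a⟩
    cases b <;> simp [Equiv.swap_apply_of_ne_of_ne]

lemma det_upper (k : ℕ) (M : Matrix (Fin k) (Fin k) ℤ[X])
    (h : ∀ i j : Fin k, j < i → M i j = 0) : M.det = ∏ i, M i i :=
  Matrix.det_of_upperTriangular (by intro i j hij; exact h i j hij)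

lemma det_lower (k : ℕ) (M : Matrix (Fin k) (Fin k) ℤ[X])
    (h : ∀ i j : Fin k, i < j → M i j = 0) : M.det = ∏ i, M i i :=
  Matrix.det_of_lowerTriangular M (by intro i j hij; exact h i j hij)

/-- Let `B` be the `2k × 2k` integer matrix with block form `[[0, U], [L, S]]`
where `U` is upper triangular with diagonal `1`, `L` is lower triangular with
diagonal `0` and `S` is arbitrary. Then `det (X • B - Bᵀ) = X ^ k`; in
particular `B` is Alexander-trivial. -/
theorem stmt_4 (k : ℕ) (hk : 1 ≤ k)
    (U L S : Matrix (Fin k) (Fin k) ℤ)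
    (hU_tri : ∀ i j : Fin k, j < i → U i j = 0)
    (hU_diag : ∀ i : Fin k, U i i = 1)
    (hL_tri : ∀ i j : Fin k, i < j → L i j = 0)
    (hL_diag : ∀ i : Fin k, L i i = 0)
    (B : Matrix (Fin k ⊕ Fin k) (Fin k ⊕ Fin k) ℤ)
    (hB : B = Matrix.fromBlocks 0 U L S) :
    ((X : ℤ[X]) • B.map C - Bᵀ.map C).det = X ^ k := by
  subst hB
  set B₁ : Matrix (Fin k) (Fin k) ℤ[X] :=
    (X : ℤ[X]) • U.map C - Lᵀ.map C with hB₁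
  set C₁ : Matrix (Fin k) (Fin k) ℤ[X] :=
    (X : ℤ[X]) • L.map C - Uᵀ.map C with hC₁
  set D₁ : Matrix (Fin k) (Fin k) ℤ[X] :=
    (X : ℤ[X]) • S.map C - Sᵀ.map C with hD₁
  have hM : (X : ℤ[X]) • (Matrix.fromBlocks 0 U L S).map C -
      (Matrix.fromBlocks 0 U L S)ᵀ.map C =
      Matrix.fromBlocks 0 B₁ C₁ D₁ := by
    ext (i | i) (j | j) <;>
      simp [hB₁, hC₁, hD₁, Matrix.smul_apply, Matrix.sub_apply, Matrix.map_apply,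
        Matrix.transpose_apply]
  rw [hM]
  have hsub : Matrix.fromBlocks 0 B₁ C₁ D₁ =
      (Matrix.fromBlocks B₁ 0 D₁ C₁).submatrix id (Equiv.sumComm (Fin k) (Fin k)) := by
    ext (i | i) (j | j) <;> rfl
  rw [hsub, Matrix.det_permute' (Equiv.sumComm (Fin k) (Fin k)),
    Matrix.det_fromBlocks_zero₁₂, sign_sumComm_fin]
  have hBdet : B₁.det = X ^ k := by
    rw [det_upper k B₁ (by
      intro i j hij
      simp [hB₁, Matrix.smul_apply, Matrix.sub_apply, Matrix.map_apply,
        Matrix.transpose_apply, hU_tri i j hij, hL_tri j i hij])]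
    have : ∀ i : Fin k, B₁ i i = X := by
      intro i
      simp [hB₁, Matrix.smul_apply, Matrix.sub_apply, Matrix.map_apply,
        Matrix.transpose_apply, hU_diag i, hL_diag i]
    simp [this]
  have hCdet : C₁.det = (-1 : ℤ[X]) ^ k := by
    rw [det_lower k C₁ (by
      intro i j hij
      simp [hC₁, Matrix.smul_apply, Matrix.sub_apply, Matrix.map_apply,
        Matrix.transpose_apply, hL_tri i j hij, hU_tri j i hij])]
    have : ∀ i : Fin k, C₁ i i = -1 := by
      intro i
      simp [hC₁, Matrix.smul_apply, Matrix.sub_apply, Matrix.map_apply,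
        Matrix.transpose_apply, hL_diag i, hU_diag i]
    simp [this]
  rw [hBdet, hCdet]
  push_cast
  ring_nf
  rw [mul_comm k 2, pow_mul]
  norm_num
end

section
/- Let M be an n×n integer matrix and let c, r ∈ ℤⁿ. Define the (n+2)×(n+2) integer matrix M′ by: the top-left n×n block of M′ is M; M′[i, n+1] = 0 and M′[i, n+2] = cᵢ for 1 ≤ i ≤ n; the (n+1)-st row of M′ is identically zero; M′[n+2, j] = rⱼ for 1 ≤ j ≤ n; and M′[n+2, n+1] = M′[n+2, n+2] = 1. Then det(X·M′ − M′ᵀ) = X · det(X·M − Mᵀ) in ℤ[X]. In particular, if M is Alexander-trivial, then so is M′. -/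
open Matrix Polynomial

lemma aux_blockdet {K : Type*} [Field K] {m : Type*} [Fintype m] [DecidableEq m]
    (A : Matrix m m K) (B : Matrix m (Fin 2) K) (Cm : Matrix (Fin 2) m K)
    (D : Matrix (Fin 2) (Fin 2) K) (hB : ∀ i, B i 0 = 0) (hC : ∀ j, Cm 0 j = 0)
    (hD : D 0 0 = 0) (hdet : D.det ≠ 0) :
    (Matrix.fromBlocks A B Cm D).det = D.det * A.det := by
  haveI := D.invertibleOfIsUnitDet (isUnit_iff_ne_zero.mpr hdet)
  haveI := D.detInvertibleOfInvertible
  rw [Matrix.det_fromBlocks₂₂]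
  congr 1
  have hz : B * ⅟D * Cm = 0 := by
    rw [Matrix.invOf_eq, Matrix.mul_smul, Matrix.smul_mul]
    have h0 : B * D.adjugate * Cm = 0 := by
      ext i j
      simp [Matrix.mul_apply, Fin.sum_univ_two, hB, hC, Matrix.adjugate_fin_two, hD]
    rw [h0, smul_zero]
  rw [hz, sub_zero]

/-- Enlarging an `n × n` integer matrix `M` by two rows and columns as in the
plumbing lemma: the new columns are `0` and `c`, the new rows are `0` and `r`,
and the new `2 × 2` corner block is `[[0, 0], [1, 1]]`. Then
`det (X • M' - M'ᵀ) = X * det (X • M - Mᵀ)`; in particular, if `M` is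
Alexander-trivial, then so is `M'`. -/
theorem stmt_5 (n : ℕ) (M : Matrix (Fin n) (Fin n) ℤ) (c r : Fin n → ℤ)
    (M' : Matrix (Fin n ⊕ Fin 2) (Fin n ⊕ Fin 2) ℤ)
    (hM' : M' = Matrix.fromBlocks M
      (Matrix.of fun i j => if j = 0 then 0 else c i)
      (Matrix.of fun i j => if i = 0 then 0 else r j)
      !![0, 0; 1, 1]) :
    ((X : ℤ[X]) • M'.map C - M'ᵀ.map C).det =
      X * ((X : ℤ[X]) • M.map C - Mᵀ.map C).det ∧
    ((∃ k : ℕ, ((X : ℤ[X]) • M.map C - Mᵀ.map C).det = X ^ k ∨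
        ((X : ℤ[X]) • M.map C - Mᵀ.map C).det = -X ^ k) →
      (∃ k : ℕ, ((X : ℤ[X]) • M'.map C - M'ᵀ.map C).det = X ^ k ∨
        ((X : ℤ[X]) • M'.map C - M'ᵀ.map C).det = -X ^ k)) := by
  set B0 : Matrix (Fin n) (Fin 2) ℤ := Matrix.of fun i j => if j = 0 then 0 else c i with hB0
  set C0 : Matrix (Fin 2) (Fin n) ℤ := Matrix.of fun i j => if i = 0 then 0 else r j with hC0
  set D0 : Matrix (Fin 2) (Fin 2) ℤ := !![0, 0; 1, 1] with hD0
  set A1 : Matrix (Fin n) (Fin n) ℤ[X] := (X : ℤ[X]) • M.map C - Mᵀ.map C with hA1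
  set B1 : Matrix (Fin n) (Fin 2) ℤ[X] := (X : ℤ[X]) • B0.map C - C0ᵀ.map C with hB1
  set C1 : Matrix (Fin 2) (Fin n) ℤ[X] := (X : ℤ[X]) • C0.map C - B0ᵀ.map C with hC1
  set D1 : Matrix (Fin 2) (Fin 2) ℤ[X] := (X : ℤ[X]) • D0.map C - D0ᵀ.map C with hD1
  have hN : (X : ℤ[X]) • M'.map C - M'ᵀ.map C = Matrix.fromBlocks A1 B1 C1 D1 := by
    subst hM'
    ext (i | i) (j | j) <;>
      simp [hA1, hB1, hC1, hD1, Matrix.fromBlocks, Matrix.sub_apply, Matrix.smul_apply,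
        Matrix.map_apply, Matrix.transpose_apply]
  set K := FractionRing ℤ[X]
  set f : ℤ[X] →+* K := algebraMap ℤ[X] K with hf
  have hinj : Function.Injective f := IsFractionRing.injective ℤ[X] K
  have hdetD1 : D1.det = X := by
    rw [Matrix.det_fin_two]
    simp [hD1, hD0, Matrix.vecHead, Matrix.vecTail]
  have hmd : ∀ {m' : Type} [Fintype m'] [DecidableEq m'] (P : Matrix m' m' ℤ[X]),
      (P.map f).det = f P.det := by
    intro m' _ _ P
    rw [f.map_det, RingHom.mapMatrix_apply]
  have key : ((X : ℤ[X]) • M'.map C - M'ᵀ.map C).det = X * A1.det := by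
    apply hinj
    rw [hN, f.map_det, RingHom.mapMatrix_apply, Matrix.fromBlocks_map]
    rw [aux_blockdet]
    · rw [hmd, hmd, hdetD1]
      exact (map_mul f X A1.det).symm
    · intro i
      simp [hB1, hB0, hC0, Matrix.map_apply]
    · intro j
      simp [hC1, hB0, hC0, Matrix.map_apply]
    · simp [hD1, hD0, Matrix.map_apply]
    · rw [hmd, hdetD1]
      simpa using fun h => X_ne_zero (hinj (by simpa using h))
  refine ⟨key, fun ⟨k, hk⟩ => ⟨k + 1, ?_⟩⟩
  rcases hk with hk | hk
  · left; rw [key, hk, pow_succ, mul_comm]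
  · right; rw [key, hk, pow_succ]; ring
end

section
/- Let k, n ≥ 1 and let M′ be the (2k+n)×(2k+n) integer matrix with 3×3 block form M′ = [[0, U, 0],[L, S, B],[0, C, M]], where U is a k×k upper triangular integer matrix with all diagonal entries 1, L is a k×k lower triangular integer matrix with all diagonal entries 0, S is an arbitrary k×k integer matrix, B is an arbitrary k×n integer matrix, C is an arbitrary n×k integer matrix, and M is an n×n integer matrix. Then det(X·M′ − M′ᵀ) = X^k · det(X·M − Mᵀ) in ℤ[X]. In particular, if M is Alexander-trivial, then so is M′. -/
open Matrix Polynomial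

/-- Let `M'` be the `(2k+n) × (2k+n)` integer matrix with block form
`[[0, U, 0], [L, S, B], [0, C, M]]`, where `U` is `k × k` upper triangular with
diagonal `1`, `L` is `k × k` lower triangular with diagonal `0`, `S`, `B`, `C`
are arbitrary, and `M` is `n × n`. Then
`det (X • M' - M'ᵀ) = X ^ k * det (X • M - Mᵀ)`; in particular, if `M` is
Alexander-trivial then so is `M'`. -/
theorem stmt_6 (k n : ℕ) (hk : 1 ≤ k) (hn : 1 ≤ n)
    (U L S : Matrix (Fin k) (Fin k) ℤ)
    (hU_tri : ∀ i j : Fin k, j < i → U i j = 0)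
    (hU_diag : ∀ i : Fin k, U i i = 1)
    (hL_tri : ∀ i j : Fin k, i < j → L i j = 0)
    (hL_diag : ∀ i : Fin k, L i i = 0)
    (B : Matrix (Fin k) (Fin n) ℤ) (C' : Matrix (Fin n) (Fin k) ℤ)
    (M : Matrix (Fin n) (Fin n) ℤ)
    (M' : Matrix ((Fin k ⊕ Fin k) ⊕ Fin n) ((Fin k ⊕ Fin k) ⊕ Fin n) ℤ)
    (hM' : M' = Matrix.fromBlocks
      (Matrix.fromBlocks 0 U L S)
      (Matrix.of (Sum.elim (fun _ _ => (0 : ℤ)) B))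
      (Matrix.of fun i => Sum.elim (fun _ => (0 : ℤ)) (C' i))
      M) :
    ((X : ℤ[X]) • M'.map C - M'ᵀ.map C).det =
      X ^ k * ((X : ℤ[X]) • M.map C - Mᵀ.map C).det ∧
    ((∃ m : ℕ, ((X : ℤ[X]) • M.map C - Mᵀ.map C).det = X ^ m ∨
        ((X : ℤ[X]) • M.map C - Mᵀ.map C).det = -X ^ m) →
      (∃ m : ℕ, ((X : ℤ[X]) • M'.map C - M'ᵀ.map C).det = X ^ m ∨
        ((X : ℤ[X]) • M'.map C - M'ᵀ.map C).det = -X ^ m)) := by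
  -- Abbreviations for the blocks of `X • M' - M'ᵀ` (over `ℤ[X]`).
  set P : Matrix (Fin k) (Fin k) ℤ[X] :=
    Matrix.of (fun i j => X * C (U i j) - C (L j i)) with hP
  set Q : Matrix (Fin k) (Fin k) ℤ[X] :=
    Matrix.of (fun i j => X * C (L i j) - C (U j i)) with hQ
  set S₂ : Matrix (Fin k) (Fin k) ℤ[X] :=
    Matrix.of (fun i j => X * C (S i j) - C (S j i)) with hS₂
  set G : Matrix (Fin k) (Fin n) ℤ[X] :=
    Matrix.of (fun i j => X * C (B i j) - C (C' j i)) with hG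
  set H : Matrix (Fin n) (Fin k) ℤ[X] :=
    Matrix.of (fun i j => X * C (C' i j) - C (B j i)) with hH
  set F : Matrix (Fin n) (Fin n) ℤ[X] := (X : ℤ[X]) • M.map C - Mᵀ.map C with hF
  set N : Matrix ((Fin k ⊕ Fin k) ⊕ Fin n) ((Fin k ⊕ Fin k) ⊕ Fin n) ℤ[X] :=
    (X : ℤ[X]) • M'.map C - M'ᵀ.map C with hNdef
  -- Step A: identify `N` as a block matrix.
  have hN : N = fromBlocks (fromBlocks 0 P Q S₂)
      (fromRows (0 : Matrix (Fin k) (Fin n) ℤ[X]) G)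
      (fromCols (0 : Matrix (Fin n) (Fin k) ℤ[X]) H) F := by
    subst hM'
    ext i j
    rcases i with (i | i) | i <;> rcases j with (j | j) | j <;>
      simp [hNdef, hP, hQ, hS₂, hG, hH, hF, Matrix.fromBlocks, Matrix.fromRows,
        Matrix.fromCols, Matrix.sub_apply, Matrix.smul_apply, Matrix.map_apply,
        Matrix.transpose_apply, smul_eq_mul, Sum.elim]
  -- The column-block-swap matrix.
  set J : Matrix (Fin k ⊕ Fin k) (Fin k ⊕ Fin k) ℤ[X] := fromBlocks 0 1 1 0 with hJ
  set Pm : Matrix ((Fin k ⊕ Fin k) ⊕ Fin n) ((Fin k ⊕ Fin k) ⊕ Fin n) ℤ[X] :=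
    fromBlocks J 0 0 1 with hPm
  -- Step B: compute `N * Pm`.
  have hMul : N * Pm = fromBlocks (fromBlocks P 0 S₂ Q)
      (fromRows (0 : Matrix (Fin k) (Fin n) ℤ[X]) G)
      (fromCols H (0 : Matrix (Fin n) (Fin k) ℤ[X])) F := by
    rw [hN, hPm, hJ, Matrix.fromBlocks_multiply, Matrix.fromBlocks_multiply,
      Matrix.fromCols_mul_fromBlocks]
    simp
  -- Step C: reassociate into a 2×2 block-triangular shape.
  set T : Matrix (Fin k ⊕ (Fin k ⊕ Fin n)) (Fin k ⊕ (Fin k ⊕ Fin n)) ℤ[X] :=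
    fromBlocks P 0 (Matrix.of (Sum.elim S₂ H)) (fromBlocks Q G 0 F) with hT
  have hTsub : T = (N * Pm).submatrix (Equiv.sumAssoc (Fin k) (Fin k) (Fin n)).symm
      (Equiv.sumAssoc (Fin k) (Fin k) (Fin n)).symm := by
    rw [hMul, hT]
    ext i j
    rcases i with i | (i | i) <;> rcases j with j | (j | j) <;>
      simp [Matrix.fromBlocks, Matrix.fromRows, Matrix.fromCols, Equiv.sumAssoc, Sum.elim]
  have hdetT : T.det = (N * Pm).det := by
    rw [hTsub, Matrix.det_submatrix_equiv_self]
  -- Determinants of the triangular blocks.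
  have hdetP : P.det = X ^ k := by
    have hPdiag : ∀ i : Fin k, P i i = X := fun i => by simp [hP, hU_diag, hL_diag]
    rw [Matrix.det_of_upperTriangular (M := P) ?_]
    · calc ∏ i, P i i = ∏ _i : Fin k, (X : ℤ[X]) :=
            Finset.prod_congr rfl fun i _ => hPdiag i
        _ = X ^ k := by simp
    · intro i j hij
      simp only [hP, Matrix.of_apply]
      rw [hU_tri i j hij, hL_tri j i hij]
      simp
  have hdetQ : Q.det = (-1 : ℤ[X]) ^ k := by
    have hQdiag : ∀ i : Fin k, Q i i = -1 := fun i => by simp [hQ, hU_diag, hL_diag]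
    rw [Matrix.det_of_lowerTriangular Q ?_]
    · calc ∏ i, Q i i = ∏ _i : Fin k, (-1 : ℤ[X]) :=
            Finset.prod_congr rfl fun i _ => hQdiag i
        _ = (-1) ^ k := by simp
    · intro i j hij
      have hij' : i < j := hij
      simp only [hQ, Matrix.of_apply]
      rw [hL_tri i j hij', hU_tri j i hij']
      simp
  -- Determinant of `Pm` equals `(-1)^k`, via a factorization of `J` into
  -- block-triangular matrices.
  have hJfact : J = fromBlocks 1 1 0 1 * (fromBlocks 1 0 (-1) 1 *
      (fromBlocks 1 1 0 1 * fromBlocks (-1) 0 0 1)) := by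
    rw [hJ]
    simp only [Matrix.fromBlocks_multiply]
    norm_num
  have hdetJ : J.det = (-1 : ℤ[X]) ^ k := by
    rw [hJfact]
    simp only [Matrix.det_mul, Matrix.det_fromBlocks_zero₂₁, Matrix.det_fromBlocks_zero₁₂,
      Matrix.det_one]
    simp [Matrix.det_neg, Fintype.card_fin]
  have hdetPm : Pm.det = (-1 : ℤ[X]) ^ k := by
    rw [hPm, Matrix.det_fromBlocks_zero₂₁, hdetJ, Matrix.det_one, mul_one]
  -- Put everything together.
  have hdetTval : T.det = X ^ k * ((-1 : ℤ[X]) ^ k * F.det) := by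
    rw [hT, Matrix.det_fromBlocks_zero₁₂, Matrix.det_fromBlocks_zero₂₁, hdetP, hdetQ]
  have hm1 : ((-1 : ℤ[X]) ^ k) * ((-1 : ℤ[X]) ^ k) = 1 := by
    rw [← mul_pow]; norm_num
  have key : N.det = X ^ k * F.det := by
    have h1 : N.det * (-1 : ℤ[X]) ^ k = X ^ k * ((-1 : ℤ[X]) ^ k * F.det) := by
      rw [← hdetTval, hdetT, Matrix.det_mul, hdetPm]
    calc N.det = N.det * ((-1 : ℤ[X]) ^ k * (-1 : ℤ[X]) ^ k) := by rw [hm1, mul_one]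
      _ = (N.det * (-1 : ℤ[X]) ^ k) * (-1 : ℤ[X]) ^ k := by ring
      _ = (X ^ k * ((-1 : ℤ[X]) ^ k * F.det)) * (-1 : ℤ[X]) ^ k := by rw [h1]
      _ = (X ^ k * F.det) * ((-1 : ℤ[X]) ^ k * (-1 : ℤ[X]) ^ k) := by ring
      _ = X ^ k * F.det := by rw [hm1, mul_one]
  refine ⟨key, ?_⟩
  rintro ⟨m, hm | hm⟩
  · exact ⟨k + m, Or.inl (by rw [key, hm, pow_add])⟩
  · exact ⟨k + m, Or.inr (by rw [key, hm, pow_add]; ring)⟩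
end

section
/- Let A be the 6×6 integer matrix with Aᵢᵢ = 1 for all i, A₁₂ = A₂₃ = A₄₃ = A₅₃ = A₆₃ = 1, and all other entries 0. Let v₁ = (0, 1, −2, 1, 1, 1)ᵀ and v₂ = (1, 0, 0, 0, 0, 0)ᵀ in ℤ⁶. Then v₁ᵀ·A·v₁ = 0, v₁ᵀ·A·v₂ = 0, v₂ᵀ·A·v₁ = 1 and v₂ᵀ·A·v₂ = 1; consequently, the 2×2 Gram matrix B = [[0, 0],[1, 1]] of A restricted to the span of v₁ and v₂ satisfies det(X·B − Bᵀ) = X, which is a unit in ℤ[X, X⁻¹]. -/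
open Matrix Polynomial

/-- The Seifert matrix `A` of the plumbing surface `X̃` of six positive Hopf
bands along an X-shaped tree, together with the homology classes
`v₁ = (0,1,-2,1,1,1)ᵀ` and `v₂ = (1,0,0,0,0,0)ᵀ`: the Gram values are
`v₁ᵀAv₁ = 0`, `v₁ᵀAv₂ = 0`, `v₂ᵀAv₁ = 1`, `v₂ᵀAv₂ = 1`, and the resulting
`2 × 2` Gram matrix `B = [[0,0],[1,1]]` satisfies `det (X•B - Bᵀ) = X`, which
is a unit in `ℤ[X, X⁻¹]`. -/
theorem stmt_7 (A : Matrix (Fin 6) (Fin 6) ℤ)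
    (hA : A = !![1, 1, 0, 0, 0, 0;
                 0, 1, 1, 0, 0, 0;
                 0, 0, 1, 0, 0, 0;
                 0, 0, 1, 1, 0, 0;
                 0, 0, 1, 0, 1, 0;
                 0, 0, 1, 0, 0, 1])
    (v₁ v₂ : Fin 6 → ℤ) (hv₁ : v₁ = ![0, 1, -2, 1, 1, 1])
    (hv₂ : v₂ = ![1, 0, 0, 0, 0, 0])
    (B : Matrix (Fin 2) (Fin 2) ℤ) (hB : B = !![0, 0; 1, 1]) :
    v₁ ⬝ᵥ A.mulVec v₁ = 0 ∧ v₁ ⬝ᵥ A.mulVec v₂ = 0 ∧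
    v₂ ⬝ᵥ A.mulVec v₁ = 1 ∧ v₂ ⬝ᵥ A.mulVec v₂ = 1 ∧
    ((X : ℤ[X]) • B.map C - Bᵀ.map C).det = X ∧
    IsUnit (Polynomial.toLaurent (((X : ℤ[X]) • B.map C - Bᵀ.map C).det)) := by
  subst hA hv₁ hv₂ hB
  have hdet : ((X : ℤ[X]) • (!![0, 0; 1, 1] : Matrix (Fin 2) (Fin 2) ℤ).map C -
      (!![0, 0; 1, 1] : Matrix (Fin 2) (Fin 2) ℤ)ᵀ.map C).det = X := by
    simp only [Matrix.det_fin_two, Matrix.smul_apply, Matrix.sub_apply, Matrix.map_apply,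
      Matrix.transpose_apply, Matrix.of_apply, Matrix.cons_val', Matrix.cons_val_zero,
      Matrix.cons_val_one, Matrix.head_cons, Matrix.empty_val', Matrix.cons_val_fin_one,
      Matrix.head_fin_const, map_zero, _root_.map_one]
    simp [smul_eq_mul]
  refine ⟨?_, ?_, ?_, ?_, hdet, ?_⟩
  · decide
  · decide
  · decide
  · decide
  rw [hdet]
  exact IsUnit.of_mul_eq_one (LaurentPolynomial.T (-1)) (by
    rw [Polynomial.toLaurent_X, ← LaurentPolynomial.T_add]
    norm_num)
end

section
/- Fix integers g ≥ 0 and n ≥ 1, and let Ω be the (2g+n−1)×(2g+n−1) integer matrix that is block diagonal with blocks J_g and the (n−1)×(n−1) zero matrix. An integer (2g+n−1)×(2g+n−1) matrix A satisfies both (i) Aᵀ·Ω·A = Ω and (ii) A maps the set of the last n−1 standard basis vectors {e_{2g+1}, …, e_{2g+n−1}} bijectively onto itself, if and only if A has block form [[X, 0],[M, P]], where X is a 2g×2g symplectic integer matrix (Xᵀ·J_g·X = J_g), M is an arbitrary (n−1)×2g integer matrix, and P is an (n−1)×(n−1) permutation matrix. In particular any such A lies in GL(2g+n−1, ℤ).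 -/
open Matrix

lemma stmt_10_key {g m : ℕ} (J : Matrix (Fin g ⊕ Fin g) (Fin g ⊕ Fin g) ℤ)
    (X : Matrix (Fin g ⊕ Fin g) (Fin g ⊕ Fin g) ℤ)
    (M : Matrix (Fin m) (Fin g ⊕ Fin g) ℤ)
    (P : Matrix (Fin m) (Fin m) ℤ) :
    (Matrix.fromBlocks X 0 M P)ᵀ * Matrix.fromBlocks J 0 0 0 *
        Matrix.fromBlocks X 0 M P =
      Matrix.fromBlocks (Xᵀ * J * X) 0 0 0 := by
  simp [Matrix.fromBlocks_transpose, Matrix.fromBlocks_multiply, Matrix.mul_assoc]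

/-- Characterisation of the automorphisms of `H₁` of a compact oriented
genus-`g` surface with `n` boundary components that preserve the intersection
form `Ω = J_g ⊕ 0` and permute the classes of the boundary curves: they are
exactly the matrices of block form `[[X, 0], [M, P]]` with `X` symplectic and
`P` a permutation matrix; in particular, any such matrix is invertible
over `ℤ`. -/
theorem stmt_10 (g n : ℕ) (hn : 1 ≤ n)
    (A : Matrix ((Fin g ⊕ Fin g) ⊕ Fin (n - 1))
      ((Fin g ⊕ Fin g) ⊕ Fin (n - 1)) ℤ)
    (J : Matrix (Fin g ⊕ Fin g) (Fin g ⊕ Fin g) ℤ)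
    (hJ : J = Matrix.fromBlocks 0 1 (-1) 0)
    (Ω : Matrix ((Fin g ⊕ Fin g) ⊕ Fin (n - 1))
      ((Fin g ⊕ Fin g) ⊕ Fin (n - 1)) ℤ)
    (hΩ : Ω = Matrix.fromBlocks J 0 0 0) :
    ((Aᵀ * Ω * A = Ω ∧
        ∃ σ : Equiv.Perm (Fin (n - 1)), ∀ j : Fin (n - 1),
          A.mulVec (Pi.single (Sum.inr j) 1) = Pi.single (Sum.inr (σ j)) 1) ↔
      (∃ (X : Matrix (Fin g ⊕ Fin g) (Fin g ⊕ Fin g) ℤ)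
          (M : Matrix (Fin (n - 1)) (Fin g ⊕ Fin g) ℤ)
          (σ : Equiv.Perm (Fin (n - 1))),
        Xᵀ * J * X = J ∧ A = Matrix.fromBlocks X 0 M (σ.permMatrix ℤ))) ∧
    ((Aᵀ * Ω * A = Ω ∧
        ∃ σ : Equiv.Perm (Fin (n - 1)), ∀ j : Fin (n - 1),
          A.mulVec (Pi.single (Sum.inr j) 1) = Pi.single (Sum.inr (σ j)) 1) →
      IsUnit A.det) := by
  subst hΩ
  have hiff : (Aᵀ * Matrix.fromBlocks J 0 0 0 * A = Matrix.fromBlocks J 0 0 0 ∧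
        ∃ σ : Equiv.Perm (Fin (n - 1)), ∀ j : Fin (n - 1),
          A.mulVec (Pi.single (Sum.inr j) 1) = Pi.single (Sum.inr (σ j)) 1) ↔
      (∃ (X : Matrix (Fin g ⊕ Fin g) (Fin g ⊕ Fin g) ℤ)
          (M : Matrix (Fin (n - 1)) (Fin g ⊕ Fin g) ℤ)
          (σ : Equiv.Perm (Fin (n - 1))),
        Xᵀ * J * X = J ∧ A = Matrix.fromBlocks X 0 M (σ.permMatrix ℤ)) := by
    constructor
    · rintro ⟨h1, σ, h2⟩
      have hA : A = Matrix.fromBlocks A.toBlocks₁₁ 0 A.toBlocks₂₁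
          ((σ⁻¹).permMatrix ℤ) := by
        ext i j
        rcases i with i | i <;> rcases j with j | j
        · simp [Matrix.fromBlocks, Matrix.toBlocks₁₁]
        · have := congrFun (h2 j) (Sum.inl i)
          simp [Matrix.mulVec_single, Pi.single_apply] at this
          simp [Matrix.fromBlocks, this]
        · simp [Matrix.fromBlocks, Matrix.toBlocks₂₁]
        · have := congrFun (h2 j) (Sum.inr i)
          simp [Matrix.mulVec_single, Pi.single_apply] at this
          have hiff2 : (i = σ j) ↔ (σ⁻¹ i = j) := by
            constructor
            · intro h; simp [h]
            · intro h; rw [← h]; simp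
          simp [Matrix.fromBlocks, this, PEquiv.toMatrix_apply,
            Equiv.toPEquiv_apply, hiff2]
          rw [Pi.single_apply]; exact if_congr eq_comm rfl rfl
      refine ⟨A.toBlocks₁₁, A.toBlocks₂₁, σ⁻¹, ?_, hA⟩
      rw [hA, stmt_10_key] at h1
      have := congrArg Matrix.toBlocks₁₁ h1
      simpa [Matrix.toBlocks_fromBlocks₁₁] using this
    · rintro ⟨X, M, σ, hX, rfl⟩
      refine ⟨by rw [stmt_10_key, hX], σ⁻¹, fun j => ?_⟩
      ext i
      rcases i with i | i
      · simp [Matrix.mulVec_single, Pi.single_apply, Matrix.fromBlocks]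
      · have hiff2 : ∀ i : Fin (n-1), (σ i = j) ↔ (i = σ⁻¹ j) := by
          intro i
          constructor
          · intro h; rw [← h]; simp
          · intro h; simp [h]
        simp [Matrix.mulVec_single, Pi.single_apply, Matrix.fromBlocks,
          PEquiv.toMatrix_apply, Equiv.toPEquiv_apply, hiff2]
        exact if_congr ⟨fun h => by rw [h]; simp, fun h => by rw [h]; simp⟩ rfl rfl
  refine ⟨hiff, fun h => ?_⟩
  obtain ⟨X, M, σ, hX, rfl⟩ := hiff.mp h
  rw [Matrix.det_fromBlocks_zero₁₂]
  have hJu : IsUnit J.det := by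
    apply Matrix.isUnit_det_of_right_inverse (B := -J)
    have hmul : J * J = -1 := by
      subst hJ
      simp [Matrix.fromBlocks_multiply, ← Matrix.fromBlocks_one,
        Matrix.fromBlocks_neg]
    rw [Matrix.mul_neg, hmul, neg_neg]
  have hdet : X.det * X.det = 1 := by
    have h' := congrArg Matrix.det hX
    rw [Matrix.det_mul, Matrix.det_mul, Matrix.det_transpose] at h'
    have hJ0 : J.det ≠ 0 := hJu.ne_zero
    have h2 : X.det * X.det * J.det = 1 * J.det := by
      rw [one_mul]; linear_combination h'
    exact mul_right_cancel₀ hJ0 h2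
  have hP : IsUnit ((σ.permMatrix ℤ).det) := by
    rw [Matrix.det_permutation]
    rcases Int.units_eq_one_or (Equiv.Perm.sign σ) with h | h <;>
      simp [h, Int.isUnit_iff]
  exact (IsUnit.of_mul_eq_one _ hdet).mul hP
end

section
/- Let G be a group and a₁, …, a_m ∈ G elements satisfying the braid relations: aᵢ·a_{i+1}·aᵢ = a_{i+1}·aᵢ·a_{i+1} for 1 ≤ i ≤ m−1, and aᵢ·aⱼ = aⱼ·aᵢ whenever |i−j| ≥ 2. For k ≥ 2 set Γ_k = a₁·a₂⋯a_{k−2}·a_{k−1}·a_{k−2}⋯a₂·a₁ (so Γ₂ = a₁). Then for all i, j with 2 ≤ i ≤ j ≤ m, the identity (aᵢ·a_{i+1}⋯aⱼ)·Γᵢ·(aᵢ·a_{i+1}⋯aⱼ) = Γ_{i+1}·(a_{i+1}·a_{i+2}⋯aⱼ)·(aᵢ·a_{i+1}⋯a_{j−1}) holds in G (where for j = i the products a_{i+1}⋯aⱼ and aᵢ⋯a_{j−1} are empty, i.e., equal the identity element). -/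
/-- The product `a i * a (i+1) * ⋯ * a j` (empty, i.e. `1`, if `j < i`). -/
def ascProd {G : Type*} [Group G] (a : ℕ → G) (i j : ℕ) : G :=
  ((List.range (j + 1 - i)).map fun t => a (i + t)).prod

/-- `Γ k = a 1 * a 2 * ⋯ * a (k-2) * a (k-1) * a (k-2) * ⋯ * a 2 * a 1`
(so `Γ 2 = a 1`). -/
def gammaWord {G : Type*} [Group G] (a : ℕ → G) (k : ℕ) : G :=
  ((List.range (k - 1)).map fun t => a (1 + t)).prod *
    ((List.range (k - 2)).map fun t => a (k - 2 - t)).prod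

namespace BraidSubAux

variable {G : Type*} [Group G] (a : ℕ → G)

/-- Descending product `a n * a (n-1) * ⋯ * a 1`. -/
def descProd (n : ℕ) : G := ((List.range n).map fun t => a (n - t)).prod

lemma descProd_zero : descProd a 0 = 1 := by simp [descProd]

lemma descProd_succ (n : ℕ) : descProd a (n + 1) = a (n + 1) * descProd a n := by
  unfold descProd
  rw [List.range_succ_eq_map, List.map_cons, List.prod_cons, List.map_map]
  congr 2
  refine List.map_congr_left fun t _ => ?_
  simp only [Function.comp_apply]
  congr 1
  omega

lemma gammaWord_eq (k : ℕ) : gammaWord a k = ascProd a 1 (k - 1) * descProd a (k - 2) := by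
  unfold gammaWord ascProd descProd
  congr 2

lemma ascProd_empty {i j : ℕ} (h : j < i) : ascProd a i j = 1 := by
  unfold ascProd
  have : j + 1 - i = 0 := by omega
  simp [this]

lemma ascProd_self (i : ℕ) : ascProd a i i = a i := by
  unfold ascProd
  have : i + 1 - i = 1 := by omega
  rw [this]
  simp [List.range_succ]

lemma ascProd_append {i j : ℕ} (h : i ≤ j + 1) :
    ascProd a i (j + 1) = ascProd a i j * a (j + 1) := by
  unfold ascProd
  have h1 : j + 1 + 1 - i = (j + 1 - i) + 1 := by omega
  rw [h1, List.range_succ, List.map_append, List.prod_append]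
  congr 2
  simp only [List.map_cons, List.map_nil, List.prod_cons, List.prod_nil, mul_one]
  congr 1
  omega

lemma ascProd_append' {i j : ℕ} (h1 : 1 ≤ j) (h : i ≤ j) :
    ascProd a i j = ascProd a i (j - 1) * a j := by
  obtain ⟨j', rfl⟩ : ∃ j', j = j' + 1 := ⟨j - 1, by omega⟩
  exact ascProd_append a (by omega)

variable {m : ℕ}
  (hcomm : ∀ i j : ℕ, 1 ≤ i → 1 ≤ j → i ≤ m → j ≤ m →
      (i + 2 ≤ j ∨ j + 2 ≤ i) → a i * a j = a j * a i)

include hcomm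

lemma commute_asc {x i j : ℕ} (hx1 : 1 ≤ x) (hxm : x ≤ m)
    (hi : 1 ≤ i) (hjm : j ≤ m) (h : x + 2 ≤ i ∨ j + 2 ≤ x) :
    a x * ascProd a i j = ascProd a i j * a x := by
  unfold ascProd
  refine (Commute.list_prod_right _ _ ?_).eq
  intro y hy
  simp only [List.mem_map, List.mem_range] at hy
  obtain ⟨t, ht, rfl⟩ := hy
  rcases h with h | h
  · exact hcomm x (i + t) hx1 (by omega) hxm (by omega) (Or.inl (by omega))
  · exact hcomm x (i + t) hx1 (by omega) hxm (by omega) (Or.inr (by omega))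

lemma commute_desc {x n : ℕ} (hxm : x ≤ m) (hnm : n ≤ m) (h : n + 2 ≤ x) :
    a x * descProd a n = descProd a n * a x := by
  unfold descProd
  refine (Commute.list_prod_right _ _ ?_).eq
  intro y hy
  simp only [List.mem_map, List.mem_range] at hy
  obtain ⟨t, ht, rfl⟩ := hy
  exact hcomm x (n - t) (by omega) (by omega) hxm (by omega) (Or.inr (by omega))

lemma commute_gamma {x i : ℕ} (hx : i + 1 ≤ x) (hxm : x ≤ m) (h2 : 2 ≤ i) (him : i ≤ m) :
    a x * gammaWord a i = gammaWord a i * a x := by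
  rw [gammaWord_eq, ← mul_assoc,
    commute_asc a hcomm (by omega) hxm (by omega) (by omega) (Or.inr (by omega)),
    mul_assoc, commute_desc a hcomm hxm (by omega) (by omega), ← mul_assoc]

end BraidSubAux

open BraidSubAux in
/-- For elements `a 1, …, a m` of a group satisfying the braid relations, the
substitution identity
`(aᵢ⋯aⱼ) Γᵢ (aᵢ⋯aⱼ) = Γ_{i+1} (a_{i+1}⋯aⱼ) (aᵢ⋯a_{j-1})` holds for all
`2 ≤ i ≤ j ≤ m`. -/
theorem stmt_11 {G : Type*} [Group G] (m : ℕ) (a : ℕ → G)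
    (hbraid : ∀ i : ℕ, 1 ≤ i → i + 1 ≤ m →
      a i * a (i + 1) * a i = a (i + 1) * a i * a (i + 1))
    (hcomm : ∀ i j : ℕ, 1 ≤ i → 1 ≤ j → i ≤ m → j ≤ m →
      (i + 2 ≤ j ∨ j + 2 ≤ i) → a i * a j = a j * a i) :
    ∀ i j : ℕ, 2 ≤ i → i ≤ j → j ≤ m →
      ascProd a i j * gammaWord a i * ascProd a i j =
        gammaWord a (i + 1) * ascProd a (i + 1) j * ascProd a i (j - 1) := by
  -- base identity: a i * Γ i * a i = Γ (i+1)
  have hbase : ∀ i : ℕ, 2 ≤ i → i ≤ m →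
      a i * gammaWord a i * a i = gammaWord a (i + 1) := by
    intro i h2 him
    obtain ⟨n, rfl⟩ : ∃ n, i = n + 2 := ⟨i - 2, by omega⟩
    rw [gammaWord_eq, gammaWord_eq]
    show a (n + 2) * (ascProd a 1 (n + 1) * descProd a n) * a (n + 2) =
      ascProd a 1 (n + 2) * descProd a (n + 1)
    have hP : ascProd a 1 (n + 1) = ascProd a 1 n * a (n + 1) :=
      ascProd_append a (by omega)
    have hP2 : ascProd a 1 (n + 2) = ascProd a 1 n * a (n + 1) * a (n + 2) := by
      rw [ascProd_append a (by omega), hP]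
    have hD : descProd a (n + 1) = a (n + 1) * descProd a n := descProd_succ a n
    have c1 : a (n + 2) * ascProd a 1 n = ascProd a 1 n * a (n + 2) :=
      commute_asc a hcomm (by omega) him (by omega) (by omega) (Or.inr (by omega))
    have c2 : a (n + 2) * descProd a n = descProd a n * a (n + 2) :=
      commute_desc a hcomm him (by omega) (by omega)
    have hb : a (n + 1) * a (n + 2) * a (n + 1) = a (n + 2) * a (n + 1) * a (n + 2) :=
      hbraid (n + 1) (by omega) (by omega)
    rw [hP, hP2, hD]
    calc a (n + 2) * (ascProd a 1 n * a (n + 1) * descProd a n) * a (n + 2)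
        = (a (n + 2) * ascProd a 1 n) * a (n + 1) * (descProd a n * a (n + 2)) := by
          simp only [mul_assoc]
      _ = (ascProd a 1 n * a (n + 2)) * a (n + 1) * (a (n + 2) * descProd a n) := by
          rw [c1, ← c2]
      _ = ascProd a 1 n * (a (n + 2) * a (n + 1) * a (n + 2)) * descProd a n := by
          simp only [mul_assoc]
      _ = ascProd a 1 n * (a (n + 1) * a (n + 2) * a (n + 1)) * descProd a n := by
          rw [← hb]
      _ = ascProd a 1 n * a (n + 1) * a (n + 2) * (a (n + 1) * descProd a n) := by
          simp only [mul_assoc]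
  intro i j h2 hij
  induction j, hij using Nat.le_induction with
  | base =>
    intro him
    rw [ascProd_self, ascProd_empty a (show i < i + 1 by omega),
      ascProd_empty a (show i - 1 < i by omega), mul_one, mul_one]
    exact hbase i h2 him
  | succ j hij ih =>
    intro hjm
    have hij' := ih (by omega)
    have e1 : ascProd a i (j + 1) = ascProd a i j * a (j + 1) :=
      ascProd_append a (by omega)
    have e2 : ascProd a i j = ascProd a i (j - 1) * a j :=
      ascProd_append' a (by omega) hij
    have e3 : ascProd a (i + 1) (j + 1) = ascProd a (i + 1) j * a (j + 1) :=
      ascProd_append a (by omega)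
    have cg : a (j + 1) * gammaWord a i = gammaWord a i * a (j + 1) :=
      commute_gamma a hcomm (by omega) hjm h2 (by omega)
    have cA : a (j + 1) * ascProd a i (j - 1) = ascProd a i (j - 1) * a (j + 1) :=
      commute_asc a hcomm (by omega) hjm (by omega) (by omega) (Or.inr (by omega))
    have hb : a j * a (j + 1) * a j = a (j + 1) * a j * a (j + 1) :=
      hbraid j (by omega) hjm
    rw [e2] at hij'
    show ascProd a i (j + 1) * gammaWord a i * ascProd a i (j + 1) =
      gammaWord a (i + 1) * ascProd a (i + 1) (j + 1) * ascProd a i j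
    rw [e1, e2, e3]
    set B := ascProd a i (j - 1)
    set C := ascProd a (i + 1) j
    set Γ := gammaWord a i
    set Γ' := gammaWord a (i + 1)
    set x := a (j + 1)
    set y := a j
    calc B * y * x * Γ * (B * y * x)
        = (B * y) * (x * Γ) * (B * (y * x)) := by simp only [mul_assoc]
      _ = (B * y) * (Γ * x) * (B * (y * x)) := by rw [cg]
      _ = (B * y) * Γ * ((x * B) * (y * x)) := by simp only [mul_assoc]
      _ = (B * y) * Γ * ((B * x) * (y * x)) := by rw [cA]
      _ = ((B * y) * Γ * B) * (x * y * x) := by simp only [mul_assoc]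
      _ = ((B * y) * Γ * B) * (y * x * y) := by rw [← hb]
      _ = ((B * y) * Γ * (B * y)) * (x * y) := by simp only [mul_assoc]
      _ = (Γ' * C * B) * (x * y) := by rw [hij']
      _ = Γ' * C * ((B * x) * y) := by simp only [mul_assoc]
      _ = Γ' * C * ((x * B) * y) := by rw [← cA]
      _ = Γ' * (C * x) * (B * y) := by simp only [mul_assoc]
end

section
/- Let a, q, k, r be natural numbers with a ≥ 1, q ≥ 1, a·q = 17·k + r, 0 ≤ r ≤ 16, and (3a − 1)·(q − 1) > 64. Define s = 0 if 0 ≤ r ≤ 6, s = 1 if 7 ≤ r ≤ 9, s = 2 if 10 ≤ r ≤ 12, and s = 3 if 13 ≤ r ≤ 16. Then 51·(4·k + s) ≥ 4·(3a − 1)·(q − 1). -/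
/-- Arithmetic core of the paper's Lemma for `3 ∣ p`: if `a*q = 17*k + r` with
`r ≤ 16` and `(3a-1)(q-1) > 64`, and `s` is the step function taking values
`0, 1, 2, 3` on `[0,6], [7,9], [10,12], [13,16]` respectively, then
`51 * (4k + s) ≥ 4 * (3a-1) * (q-1)`. -/
theorem stmt_12 (a q k r s : ℕ) (ha : 1 ≤ a) (hq : 1 ≤ q)
    (h17 : a * q = 17 * k + r) (hr : r ≤ 16)
    (hbig : 64 < (3 * a - 1) * (q - 1))
    (hs0 : r ≤ 6 → s = 0)
    (hs1 : 7 ≤ r → r ≤ 9 → s = 1)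
    (hs2 : 10 ≤ r → r ≤ 12 → s = 2)
    (hs3 : 13 ≤ r → r ≤ 16 → s = 3) :
    4 * ((3 * a - 1) * (q - 1)) ≤ 51 * (4 * k + s) := by
  obtain ⟨x, hx⟩ : ∃ x, 3 * a = x + 1 := ⟨3 * a - 1, by omega⟩
  obtain ⟨y, hy⟩ : ∃ y, q = y + 1 := ⟨q - 1, by omega⟩
  have hx' : 3 * a - 1 = x := by omega
  have hy' : q - 1 = y := by omega
  rw [hx', hy'] at hbig ⊢
  have h3 : x * y + x + y + 1 = 51 * k + 3 * r := by
    have h : (x + 1) * (y + 1) = 3 * (a * q) := by rw [← hx, ← hy]; ring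
    rw [h17] at h
    nlinarith
  have hxy : 17 ≤ x + y := by
    by_contra h
    push_neg at h
    have : x * y ≤ 64 := by nlinarith [two_mul_le_add_sq x y]
    omega
  generalize hm : x * y = m at hbig h3 ⊢
  rcases Nat.lt_or_ge r 7 with h | h
  · have := hs0 (by omega); omega
  rcases Nat.lt_or_ge r 10 with h2 | h2
  · have := hs1 (by omega) (by omega); omega
  rcases Nat.lt_or_ge r 13 with h3' | h3'
  · have := hs2 (by omega) (by omega); omega
  · have := hs3 (by omega) (by omega); omega
end
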